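/- Let d ≥ 1 and N ≥ 2, and let x_1, …, x_{N+1} ∈ ℝ^d. If the unbiased empirical covariance S_N of the first N points is positive definite, then the biased empirical covariance Σ_{N+1} of all N+1 points satisfies Σ_{N+1} ⪰ ((N−1)/(N+1))·S_N in the Loewner order; in particular Σ_{N+1} is positive definite (hence nonsingular). -/

import Mathlib

/-!
Centre the first `N` points at their own mean `μ_N`. For every point `p` the parallel axis
identity gives
`∑_{i ≤ N+1} (x_i - p)(x_i - p)ᵀ = (N - 1) S_N + N (μ_N - p)(μ_N - p)ᵀ + (x_{N+1} - p)(x_{N+1} - p)ᵀ`,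
and at `p = μ_{N+1}` the left side is `(N + 1) Σ_{N+1}`. Hence `Σ_{N+1} - ((N - 1)/(N + 1)) S_N`
is a nonnegative combination of rank-one positive semidefinite matrices, and adding back the
positive definite matrix `((N - 1)/(N + 1)) S_N` makes `Σ_{N+1}` positive definite.
-/

open Matrix

section Scatter

variable {ι n R : Type*} [Fintype ι] [CommRing R]

def scatter (x : ι → n → R) (p : n → R) : Matrix n n R :=
  ∑ i, vecMulVec (x i - p) (x i - p)

theorem scatter_eq_scatter_add_of_sum_eq {x : ι → n → R} {m : n → R}
    (hm : ∑ i, x i = Fintype.card ι • m) (p : n → R) :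
    scatter x p = scatter x m + Fintype.card ι • vecMulVec (m - p) (m - p) := by
  ext k l
  have hk : ∑ i, x i k = Fintype.card ι • m k := by simpa using congrFun hm k
  have hl : ∑ i, x i l = Fintype.card ι • m l := by simpa using congrFun hm l
  have hterm : ∀ i, (x i k - p k) * (x i l - p l) = (x i k - m k) * (x i l - m l)
      + (x i k * (m l - p l) + (m k - p k) * x i l + (p k * p l - m k * m l)) := by
    intro i; ring
  simp only [scatter, Matrix.add_apply, Matrix.sum_apply, Matrix.smul_apply, vecMulVec_apply,
    Pi.sub_apply, hterm, Finset.sum_add_distrib]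
  rw [← Finset.sum_mul, ← Finset.mul_sum, hk, hl, Finset.sum_const, Finset.card_univ]
  simp only [nsmul_eq_mul]
  ring

theorem scatter_fin_succ {N : ℕ} (x : Fin (N + 1) → n → R) (p : n → R) :
    scatter x p = scatter (fun i : Fin N ↦ x i.castSucc) p
      + vecMulVec (x (Fin.last N) - p) (x (Fin.last N) - p) :=
  Fin.sum_univ_castSucc _

end Scatter

theorem posSemidef_scatter_sub_scatter_init {n : Type*} [Fintype n] {N : ℕ}
    {x : Fin (N + 1) → n → ℝ} {m : n → ℝ}
    (hm : ∑ i : Fin N, x i.castSucc = N • m) (p : n → ℝ) :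
    (scatter x p - scatter (fun i : Fin N ↦ x i.castSucc) m).PosSemidef := by
  rw [scatter_fin_succ, scatter_eq_scatter_add_of_sum_eq (by rwa [Fintype.card_fin]) p,
    Fintype.card_fin, add_assoc, add_sub_cancel_left]
  exact ((posSemidef_vecMulVec_self_star _).smul N.cast_nonneg).add
    (posSemidef_vecMulVec_self_star _)

theorem biased_covariance_posdef_general (d N : ℕ) (hN : 2 ≤ N)
    (x : Fin (N + 1) → (Fin d → ℝ))
    (μN μN1 : Fin d → ℝ)
    (hμN : μN = (N : ℝ)⁻¹ • ∑ i : Fin N, x i.castSucc)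
    (SN SigmaN1 : Matrix (Fin d) (Fin d) ℝ)
    (hSN : SN = ((N : ℝ) - 1)⁻¹ •
      ∑ i : Fin N, vecMulVec (x i.castSucc - μN) (x i.castSucc - μN))
    (hSigmaN1 : SigmaN1 = ((N : ℝ) + 1)⁻¹ •
      ∑ i : Fin (N + 1), vecMulVec (x i - μN1) (x i - μN1))
    (hpos : SN.PosDef) :
    (SigmaN1 - (((N : ℝ) - 1) / ((N : ℝ) + 1)) • SN).PosSemidef
      ∧ SigmaN1.PosDef ∧ IsUnit SigmaN1 := by
  have hN1 : (0 : ℝ) < N - 1 := by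
    have : (2 : ℝ) ≤ N := by exact_mod_cast hN
    linarith
  have hsum : ∑ i : Fin N, x i.castSucc = N • μN := by
    rw [hμN, ← Nat.cast_smul_eq_nsmul ℝ, smul_inv_smul₀ (by positivity)]
  have hgap : SigmaN1 - (((N : ℝ) - 1) / ((N : ℝ) + 1)) • SN
      = ((N : ℝ) + 1)⁻¹ • (scatter x μN1 - scatter (fun i : Fin N ↦ x i.castSucc) μN) := by
    have hcoeff : ((N : ℝ) - 1) / ((N : ℝ) + 1) * ((N : ℝ) - 1)⁻¹ = ((N : ℝ) + 1)⁻¹ := by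
      field_simp
    rw [hSigmaN1, hSN, smul_smul, hcoeff, smul_sub]
    rfl
  have hgap_psd : (SigmaN1 - (((N : ℝ) - 1) / ((N : ℝ) + 1)) • SN).PosSemidef :=
    hgap ▸ (posSemidef_scatter_sub_scatter_init hsum μN1).smul (by positivity)
  have hSigma_pd : SigmaN1.PosDef := by
    have hc : (0 : ℝ) < ((N : ℝ) - 1) / ((N : ℝ) + 1) := div_pos hN1 (by positivity)
    simpa using PosDef.posSemidef_add hgap_psd (hpos.smul hc)
  exact ⟨hgap_psd, hSigma_pd, hSigma_pd.isUnit⟩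

/-- If the unbiased empirical covariance `S_N` of the first `N` points is
positive definite, then the biased empirical covariance `Σ_{N+1}` of all `N+1` points satisfies
`Σ_{N+1} ⪰ ((N−1)/(N+1))·S_N` in the Loewner order; in particular `Σ_{N+1}` is positive
definite, hence nonsingular. -/
theorem biased_covariance_posdef (d N : ℕ) (hd : 1 ≤ d) (hN : 2 ≤ N)
    (x : Fin (N + 1) → (Fin d → ℝ))
    (μN μN1 : Fin d → ℝ)
    (hμN : μN = (N : ℝ)⁻¹ • ∑ i : Fin N, x i.castSucc)
    (hμN1 : μN1 = ((N : ℝ) + 1)⁻¹ • ∑ i : Fin (N + 1), x i)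
    (SN SigmaN1 : Matrix (Fin d) (Fin d) ℝ)
    (hSN : SN = ((N : ℝ) - 1)⁻¹ •
      ∑ i : Fin N, vecMulVec (x i.castSucc - μN) (x i.castSucc - μN))
    (hSigmaN1 : SigmaN1 = ((N : ℝ) + 1)⁻¹ •
      ∑ i : Fin (N + 1), vecMulVec (x i - μN1) (x i - μN1))
    (hpos : SN.PosDef) :
    (SigmaN1 - (((N : ℝ) - 1) / ((N : ℝ) + 1)) • SN).PosSemidef
      ∧ SigmaN1.PosDef ∧ IsUnit SigmaN1 :=
  biased_covariance_posdef_general d N hN x μN μN1 hμN SN SigmaN1 hSN hSigmaN1 hpos
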